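/- Let θ be a theta function for Γ_τ of type (a, b). Then θ is nonvanishing on ℂ if and only if θ is a trivial theta function, i.e. θ(z) = e^{Az² + Bz + C} for some constants A, B, C ∈ ℂ. -/

import Mathlib

/-!
The logarithmic derivative `f = θ'/θ` of a nonvanishing theta function is entire and satisfies
`f(z + γ) = f(z) + 2πi a_γ`, so `f'` is `Γ_τ`-periodic, hence bounded, hence constant by
Liouville. Thus `f` is affine, and integrating `θ'/θ = αz + β` gives
`θ = e^{αz²/2 + βz + C}`.
-/

open Complex

/-- `θ` is a theta function of type `(a, b)` for the lattice `Γ_τ = ℤ + τℤ`: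
entire, not identically zero, with `θ(z+γ) = e^{2πi(a_γ z + b_γ)} θ(z)`. -/
def IsThetaOfType (τ : ℂ) (a b : ℂ → ℂ) (θ : ℂ → ℂ) : Prop :=
  Differentiable ℂ θ ∧ (∃ z : ℂ, θ z ≠ 0) ∧
    ∀ γ ∈ AddSubgroup.closure ({1, τ} : Set ℂ), ∀ z : ℂ,
      θ (z + γ) = Complex.exp (2 * (Real.pi : ℂ) * Complex.I * (a γ * z + b γ)) * θ z

theorem Complex.linearIndependent_one_of_im_ne_zero {τ : ℂ} (hτ : τ.im ≠ 0) :
    LinearIndependent ℝ ![1, τ] := by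
  refine LinearIndependent.pair_iff.mpr fun s t hst => ?_
  have hre := congrArg re hst
  have him := congrArg im hst
  simp only [real_smul, add_re, add_im, mul_re, mul_im, ofReal_re, ofReal_im, one_re, one_im,
    zero_re, zero_im] at hre him
  have ht : t = 0 := by simpa [hτ] using him
  subst ht
  simpa using hre

theorem Differentiable.apply_eq_apply_of_periodic {E : Type*} [NormedAddCommGroup E]
    [NormedSpace ℂ E] (L : PeriodPair) {f : ℂ → E} (hf : Differentiable ℂ f)
    (hper : ∀ z, ∀ w ∈ L.lattice, f (z + w) = f z) (z w : ℂ) : f z = f w :=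
  hf.apply_eq_apply_of_bounded
    (IsZLattice.isCompact_range_of_periodic L.lattice f hf.continuous hper).isBounded z w

theorem exists_eq_mul_add_of_add_eq_add_const (L : PeriodPair) {f : ℂ → ℂ}
    (hf : Differentiable ℂ f) (hf_add : ∀ w ∈ L.lattice, ∃ c, ∀ z, f (z + w) = f z + c) :
    ∃ α β, ∀ z, f z = α * z + β := by
  have hper : ∀ z, ∀ w ∈ L.lattice, deriv f (z + w) = deriv f z := fun z w hw => by
    obtain ⟨c, hc⟩ := hf_add w hw
    rw [← deriv_comp_add_const, funext hc, deriv_add_const]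
  have hconst z : deriv f z = deriv f 0 := hf.deriv.apply_eq_apply_of_periodic L hper z 0
  refine ⟨deriv f 0, f 0, fun z => ?_⟩
  have hg : Differentiable ℂ fun z => f z - deriv f 0 * z := by fun_prop
  have hg' z : deriv (fun z => f z - deriv f 0 * z) z = 0 := by
    rw [deriv_fun_sub (hf z) (by fun_prop), deriv_const_mul_field', hconst z]
    simp
  have hg_eq := is_const_of_deriv_eq_zero hg hg' z 0
  simp only [mul_zero, sub_zero] at hg_eq
  rw [← hg_eq]
  ring

theorem logDeriv_add_of_eq_exp_mul {θ : ℂ → ℂ} {w α β : ℂ} (hθ : Differentiable ℂ θ)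
    (hθ_add : ∀ z, θ (z + w) = exp (α * z + β) * θ z) {z : ℂ} (hz : θ z ≠ 0) :
    logDeriv θ (z + w) = logDeriv θ z + α := by
  have hcomp : logDeriv θ (z + w) = logDeriv (fun z => θ (z + w)) z := by
    rw [logDeriv_apply, logDeriv_apply, deriv_comp_add_const]
  have hexp : logDeriv (fun z => exp (α * z + β)) z = α := by
    rw [show (fun z => exp (α * z + β)) = exp ∘ fun z => α * z + β from rfl,
      logDeriv_comp (by fun_prop) (by fun_prop), logDeriv_exp]
    simp
  rw [hcomp, funext hθ_add, logDeriv_mul (f := fun z => exp (α * z + β)) z (exp_ne_zero _) hz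
    (by fun_prop) (hθ z), hexp, add_comm]

theorem exists_eq_exp_of_logDeriv_eq {θ : ℂ → ℂ} {α β : ℂ} (hθ : Differentiable ℂ θ)
    (hθ0 : ∀ z, θ z ≠ 0) (hθ_log : ∀ z, logDeriv θ z = α * z + β) :
    ∃ C, ∀ z, θ z = exp (α / 2 * z ^ 2 + β * z + C) := by
  set q : ℂ → ℂ := fun z => α / 2 * z ^ 2 + β * z
  have hψ z : HasDerivAt (fun z => θ z * exp (-q z)) 0 z := by
    have hq : HasDerivAt (fun z => -q z) (-(α * z + β)) z := by
      refine (((hasDerivAt_pow 2 z).const_mul (α / 2)).add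
        ((hasDerivAt_id z).const_mul β)).neg.congr_deriv ?_
      ring
    have hθ' : deriv θ z = (α * z + β) * θ z := by
      rw [← hθ_log, logDeriv_apply, div_mul_cancel₀ _ (hθ0 z)]
    refine ((hθ z).hasDerivAt.mul hq.cexp).congr_deriv ?_
    rw [hθ']
    ring
  refine ⟨log (θ 0), fun z => ?_⟩
  have hψ_eq :=
    is_const_of_deriv_eq_zero (fun z => (hψ z).differentiableAt) (fun z => (hψ z).deriv) z 0
  simp only [q, mul_zero, add_zero, zero_pow two_ne_zero, neg_zero, exp_zero, mul_one] at hψ_eq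
  rw [exp_add, exp_log (hθ0 0), ← hψ_eq, mul_left_comm, ← exp_add, add_neg_cancel, exp_zero,
    mul_one]

/-- A theta function for `Γ_τ` is nonvanishing on `ℂ` if and only if it is a trivial
theta function, i.e. `θ(z) = e^{A z² + B z + C}` for some constants `A, B, C ∈ ℂ`. -/
theorem theta_nonvanishing_iff_trivial (τ : ℂ) (hτ : 0 < τ.im)
    (a b θ : ℂ → ℂ) (h : IsThetaOfType τ a b θ) :
    (∀ z : ℂ, θ z ≠ 0) ↔
      ∃ A B C : ℂ, ∀ z : ℂ, θ z = Complex.exp (A * z ^ 2 + B * z + C) := by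
  obtain ⟨hθ, -, hθ_add⟩ := h
  refine ⟨fun hθ0 => ?_, fun ⟨A, B, C, hθ_eq⟩ z => hθ_eq z ▸ exp_ne_zero _⟩
  let L : PeriodPair := ⟨1, τ, linearIndependent_one_of_im_ne_zero hτ.ne'⟩
  have hL w (hw : w ∈ L.lattice) : w ∈ AddSubgroup.closure {1, τ} := by
    rwa [← Submodule.span_int_eq_addSubgroupClosure]
  have hlog : Differentiable ℂ (logDeriv θ) := hθ.deriv.div hθ hθ0
  obtain ⟨α, β, hαβ⟩ := exists_eq_mul_add_of_add_eq_add_const L hlog fun w hw =>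
    ⟨_, fun z => logDeriv_add_of_eq_exp_mul (α := 2 * Real.pi * I * a w)
      (β := 2 * Real.pi * I * b w) hθ
      (fun x => by rw [hθ_add w (hL w hw), mul_add, ← mul_assoc]) (hθ0 z)⟩
  obtain ⟨C, hC⟩ := exists_eq_exp_of_logDeriv_eq hθ hθ0 hαβ
  exact ⟨α / 2, β, C, hC⟩
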